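/- arXiv:2603.26501 — 4 statements merged into one kernel-verified Lean document; each statement's English description precedes it below -/
import Mathlib

section
/- Let k be a field of characteristic p > 0, let K = k((t)) be the field of formal Laurent series over k, and let K(x) be the rational function field in one variable over K. Then there is no u ∈ K(x) with u^p − u = t/x + t/(x−1). -/
/-!
Under the `x`-adic valuation `v` of `K(x)`, `t/x + t/(x-1)` has valuation `-1`: the first summand
has a simple pole at `0` and the second is regular there. On the other hand, if `v u < 0` then
`v (u^p - u) = p * v u` is divisible by `p`, and if `v u ≥ 0` then `v (u^p - u) ≥ 0`.
-/

open HahnSeries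

namespace AddValuation

variable {R : Type*} [Ring R] (v : AddValuation R (WithTop ℤ)) {p : ℕ} {u : R}

theorem map_pow_sub_self_of_neg (hp : 1 < p) (hu : v u < 0) : v (u ^ p - u) = p • v u := by
  obtain ⟨m, hm⟩ := WithTop.ne_top_iff_exists.mp (ne_top_of_lt hu)
  rw [← hm] at hu
  replace hu : m < 0 := by exact_mod_cast hu
  have hlt : v (u ^ p) < v u := by
    rw [v.map_pow, ← hm, ← WithTop.coe_nsmul, WithTop.coe_lt_coe, nsmul_eq_mul]
    nlinarith
  rw [v.map_sub_eq_of_lt_left hlt, v.map_pow]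

theorem nonneg_map_pow_sub_self (hu : 0 ≤ v u) : 0 ≤ v (u ^ p - u) :=
  le_trans (le_min (v.map_pow u p ▸ nsmul_nonneg hu p) hu) (v.map_sub _ _)

theorem pow_sub_self_ne_of_map_eq (hp : 1 < p) {a : R} {n : ℤ} (ha : v a = n) (hn : n < 0)
    (hpn : ¬ (p : ℤ) ∣ n) : u ^ p - u ≠ a := by
  intro h
  rcases lt_or_ge (v u) 0 with hu | hu
  · obtain ⟨m, hm⟩ := WithTop.ne_top_iff_exists.mp (ne_top_of_lt hu)
    rw [← h, v.map_pow_sub_self_of_neg hp hu, ← hm, ← WithTop.coe_nsmul, WithTop.coe_inj,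
      nsmul_eq_mul] at ha
    exact hpn ⟨m, ha.symm⟩
  · have := v.nonneg_map_pow_sub_self (p := p) hu
    rw [h, ha] at this
    exact hn.not_ge (WithTop.coe_le_coe.mp this)

end AddValuation

namespace RatFunc

variable {K : Type*} [Field K]

variable (K) in
noncomputable def xAdicAddVal : AddValuation (RatFunc K) (WithTop ℤ) :=
  (addVal ℤ K).comap (algebraMap (RatFunc K) (LaurentSeries K))

theorem xAdicAddVal_apply (f : RatFunc K) : xAdicAddVal K f = addVal ℤ K f := rfl

theorem coe_C (c : K) : ((C c : RatFunc K) : LaurentSeries K) = HahnSeries.C c := by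
  rw [← algebraMap_C, ← IsScalarTower.algebraMap_apply]
  simp

theorem xAdicAddVal_C_div_X_add_C_div_X_sub_one {c : K} (hc : c ≠ 0) :
    xAdicAddVal K (C c / X + C c / (X - 1)) = (-1 : ℤ) := by
  set v := addVal ℤ K
  have hC : v (HahnSeries.C c) = (0 : ℤ) := by
    rw [addVal_apply, C_apply, orderTop_single hc]
  have hX : v (single 1 1) = (1 : ℤ) := by
    rw [addVal_apply, orderTop_single one_ne_zero]
  have hX_sub_one : v (single 1 1 - 1) = (0 : ℤ) := by
    rw [v.map_sub_eq_of_lt_right (by rw [hX, v.map_one]; exact WithTop.coe_lt_coe.mpr one_pos),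
      v.map_one]; rfl
  have hpole : v (HahnSeries.C c / single 1 1) = (-1 : ℤ) := by
    rw [v.map_div, hC, hX]; rfl
  have hregular : v (HahnSeries.C c / (single 1 1 - 1)) = (0 : ℤ) := by
    rw [v.map_div, hC, hX_sub_one]; rfl
  simp only [xAdicAddVal_apply, map_add, map_div₀, map_sub, map_one, coe_C, coe_X]
  have hlt : v (HahnSeries.C c / single 1 1) < v (HahnSeries.C c / (single 1 1 - 1)) := by
    rw [hpole, hregular]; exact WithTop.coe_lt_coe.mpr neg_one_lt_zero
  rw [v.map_add_eq_of_lt_left hlt, hpole]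

end RatFunc

theorem no_artinSchreier_root_ratFunc_sum_general (p : ℕ) (hp : p.Prime)
    (k : Type*) [Field k] :
    ¬ ∃ u : RatFunc (LaurentSeries k),
      u ^ p - u =
        RatFunc.C (HahnSeries.single 1 1 : LaurentSeries k) / RatFunc.X +
        RatFunc.C (HahnSeries.single 1 1 : LaurentSeries k) / (RatFunc.X - 1) := by
  rintro ⟨u, hu⟩
  have hpn : ¬ (p : ℤ) ∣ -1 := by
    rw [Int.dvd_neg, Int.natCast_dvd_ofNat, Nat.dvd_one]; exact hp.ne_one
  exact (RatFunc.xAdicAddVal (LaurentSeries k)).pow_sub_self_ne_of_map_eq hp.one_lt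
    (RatFunc.xAdicAddVal_C_div_X_add_C_div_X_sub_one (single_ne_zero one_ne_zero))
    neg_one_lt_zero hpn hu

/-- Let `k` be a field of characteristic `p > 0`, `K = k((t))` the Laurent series field,
and `K(x)` the rational function field over `K`. Then the Artin–Schreier equation
`u ^ p - u = t/x + t/(x-1)` has no solution `u ∈ K(x)`. -/
theorem no_artinSchreier_root_ratFunc_sum (p : ℕ) (hp : p.Prime)
    (k : Type*) [Field k] [CharP k p] :
    ¬ ∃ u : RatFunc (LaurentSeries k),
      u ^ p - u =
        RatFunc.C (HahnSeries.single 1 1 : LaurentSeries k) / RatFunc.X +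
        RatFunc.C (HahnSeries.single 1 1 : LaurentSeries k) / (RatFunc.X - 1) :=
  no_artinSchreier_root_ratFunc_sum_general p hp k
end

section
/- Let k be a field of characteristic p > 0, let K = k((t)) be the field of formal Laurent series over k, and let K(x) be the rational function field in one variable over K. Then there is no u ∈ K(x) with u^p − u = t/x. -/
/-
Use the `x`-adic valuation `v` of `K(x)`, for which `v (t / x) = exp 1 > 1`. If `v u ≤ 1` then
`v (u ^ p - u) ≤ 1`; if `v u > 1` then `u ^ p` dominates and `v (u ^ p - u) = v u ^ p`. So
`exp 1` would be a `p`-th power in `ℤᵐ⁰`, which is impossible since `p ≥ 2`.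
-/

open Polynomial WithZero IsDedekindDomain.HeightOneSpectrum

namespace Valuation

variable {R Γ₀ : Type*} [Ring R] [LinearOrderedCommGroupWithZero Γ₀]

theorem map_pow_sub_self_of_one_lt (v : Valuation R Γ₀) {f : R} {n : ℕ} (hn : 2 ≤ n)
    (h : 1 < v (f ^ n - f)) : v (f ^ n - f) = v f ^ n := by
  have hf : 1 < v f := by
    by_contra! hf
    have hfn : v (f ^ n) ≤ 1 := by rw [v.map_pow]; exact pow_le_one₀ zero_le hf
    exact (v.map_sub _ _).trans (max_le hfn hf) |>.not_gt h
  have hlt : v f < v (f ^ n) := by rw [v.map_pow]; exact lt_self_pow₀ hf hn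
  rw [v.map_sub_eq_of_lt_left hlt, v.map_pow]

end Valuation

theorem WithZero.pow_ne_exp_one {n : ℕ} (hn : 2 ≤ n) (a : ℤᵐ⁰) : a ^ n ≠ exp 1 := by
  intro h
  have ha : a ≠ 0 := by rintro rfl; exact exp_ne_zero (h.symm.trans (zero_pow (by omega)))
  rw [← exp_log ha, ← exp_nsmul, exp_inj, nsmul_eq_mul] at h
  have hn1 : (n : ℤ) = 1 := Int.eq_one_of_dvd_one (by positivity) ⟨_, h.symm⟩
  omega

theorem Polynomial.idealX_valuation_C_div_X {K : Type*} [Field K] {c : K} (hc : c ≠ 0) :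
    (idealX K).valuation (RatFunc K) (RatFunc.C c / RatFunc.X) = exp 1 := by
  have hC : (idealX K).valuation (RatFunc K) (RatFunc.C c) = 1 := by
    rw [← RatFunc.algebraMap_C, valuation_of_algebraMap, intValuation_eq_one_iff,
      idealX_span, Ideal.mem_span_singleton, X_dvd_iff, coeff_C_zero]
    exact hc
  rw [map_div₀, hC, valuation_X_eq_neg_one, exp_neg, one_div, inv_inv]

theorem no_artinSchreier_root_ratFunc_general (p : ℕ) (hp : p.Prime)
    (k : Type*) [Field k] :
    ¬ ∃ u : RatFunc (LaurentSeries k),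
      u ^ p - u = RatFunc.C (HahnSeries.single 1 1 : LaurentSeries k) / RatFunc.X := by
  rintro ⟨u, hu⟩
  have hv := congrArg ((idealX (LaurentSeries k)).valuation _) hu
  rw [idealX_valuation_C_div_X (HahnSeries.single_ne_zero one_ne_zero)] at hv
  have hpow := ((idealX _).valuation _).map_pow_sub_self_of_one_lt hp.two_le
    (hv ▸ (exp_lt_exp.mpr one_pos : exp (0 : ℤ) < exp 1))
  exact pow_ne_exp_one hp.two_le _ (hpow.symm.trans hv)

/-- Let `k` be a field of characteristic `p > 0`, `K = k((t))` the Laurent series field,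
and `K(x)` the rational function field over `K`. Then the Artin–Schreier equation
`u ^ p - u = t/x` has no solution `u ∈ K(x)`. -/
theorem no_artinSchreier_root_ratFunc (p : ℕ) (hp : p.Prime)
    (k : Type*) [Field k] [CharP k p] :
    ¬ ∃ u : RatFunc (LaurentSeries k),
      u ^ p - u = RatFunc.C (HahnSeries.single 1 1 : LaurentSeries k) / RatFunc.X :=
  no_artinSchreier_root_ratFunc_general p hp k
end

section
/- Let k be a field of characteristic p > 0, let K = k((t)), and let K((s)) be the field of formal Laurent series in a variable s over K. Then there is no u ∈ K((s)) with u^p − u = t/(1+s) + t/s. (Under the substitution x = 1 + s, this says that the Artin–Schreier equation Y^p − Y = t/x + t/(x−1) has no solution in K((x−1)).) -/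
/-!
For the `s`-adic valuation `v`, the value `v (u ^ p - u)` is `≥ 0` when `v u ≥ 0`, and equals
`p • v u` when `v u < 0` because the `p`-th power then dominates; in neither case is it `-1`.
But `v (t/(1+s) + t/s) = -1`, since `t/(1+s)` has value `0` and `t/s` has value `-1`.
-/

open HahnSeries

theorem AddValuation.map_pow_sub_self_ne {R : Type*} [Ring R] (v : AddValuation R (WithTop ℤ))
    (x : R) {n : ℕ} (hn : 2 ≤ n) {m : ℤ} (hm : m < 0) (hnm : ¬ (n : ℤ) ∣ m) :
    v (x ^ n - x) ≠ m := by
  rcases le_or_gt 0 (v x) with hx | hx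
  · have hnonneg : 0 ≤ v (x ^ n - x) :=
      (le_min (by rw [v.map_pow]; exact nsmul_nonneg hx n) hx).trans (v.map_sub _ _)
    intro h
    rw [h] at hnonneg
    exact (WithTop.coe_nonneg.mp hnonneg).not_gt hm
  · obtain ⟨k, hk⟩ := WithTop.ne_top_iff_exists.mp hx.ne_top
    have hk0 : k < 0 := by rw [← hk] at hx; exact_mod_cast hx
    have hpow : v (x ^ n) = ((n * k : ℤ) : WithTop ℤ) := by
      rw [v.map_pow, ← hk, ← WithTop.coe_nsmul, nsmul_eq_mul]
    have hlt : v (x ^ n) < v x := by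
      rw [hpow, ← hk]
      exact_mod_cast (by nlinarith : (n : ℤ) * k < k)
    rw [v.map_sub_eq_of_lt_left hlt, hpow]
    exact fun h ↦ hnm ⟨k, (WithTop.coe_inj.mp h).symm⟩

theorem HahnSeries.orderTop_one_add_single {Γ R : Type*} [LinearOrder Γ] [Zero Γ]
    [NonAssocRing R] [Nontrivial R] {g : Γ} (hg : 0 < g) (r : R) :
    (1 + single g r).orderTop = 0 :=
  ((orderTop_self_sub_one_pos_iff _).mp (orderTop_sub_pos hg r)).1

theorem LaurentSeries.addVal_C_div_one_add_single_add_C_div_single {K : Type*} [Field K]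
    {a : K} (ha : a ≠ 0) :
    addVal ℤ K (C a / (1 + single 1 1) + C a / single 1 1 : LaurentSeries K) = -1 := by
  set v := addVal ℤ K
  have hC : v (C a) = 0 := by rw [addVal_apply_of_ne (C_ne_zero ha), order_C]; rfl
  have hden : v (1 + single 1 1) = 0 := orderTop_one_add_single one_pos 1
  have hs : v (single 1 1) = 1 := orderTop_single one_ne_zero
  have hfst : v (C a / (1 + single 1 1)) = 0 := by rw [v.map_div, hC, hden]; simp
  have hsnd : v (C a / single 1 1) = -1 := by rw [v.map_div, hC, hs]; simp
  rw [v.map_add_eq_of_lt_right (by rw [hfst, hsnd]; decide), hsnd]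

theorem no_artinSchreier_root_laurent_general (p : ℕ) (hp : p.Prime)
    (k : Type*) [Field k] :
    ¬ ∃ u : LaurentSeries (LaurentSeries k),
      u ^ p - u =
        HahnSeries.C (HahnSeries.single 1 1 : LaurentSeries k) /
          (1 + (HahnSeries.single 1 1 : LaurentSeries (LaurentSeries k))) +
        HahnSeries.C (HahnSeries.single 1 1 : LaurentSeries k) /
          (HahnSeries.single 1 1 : LaurentSeries (LaurentSeries k)) := by
  rintro ⟨u, hu⟩
  have hp_ndvd : ¬ (p : ℤ) ∣ -1 := by
    rw [dvd_neg, Int.natCast_dvd_ofNat]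
    exact hp.not_dvd_one
  apply AddValuation.map_pow_sub_self_ne (addVal ℤ (LaurentSeries k)) u hp.two_le
    (by norm_num) hp_ndvd
  rw [hu, LaurentSeries.addVal_C_div_one_add_single_add_C_div_single (single_ne_zero one_ne_zero)]
  rfl

/-- Let `k` be a field of characteristic `p > 0`, `K = k((t))`, and `K((s))` the Laurent
series field over `K` in a second variable `s`. Then the Artin–Schreier equation
`u ^ p - u = t/(1+s) + t/s` has no solution `u ∈ K((s))`. -/
theorem no_artinSchreier_root_laurent (p : ℕ) (hp : p.Prime)
    (k : Type*) [Field k] [CharP k p] :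
    ¬ ∃ u : LaurentSeries (LaurentSeries k),
      u ^ p - u =
        HahnSeries.C (HahnSeries.single 1 1 : LaurentSeries k) /
          (1 + (HahnSeries.single 1 1 : LaurentSeries (LaurentSeries k))) +
        HahnSeries.C (HahnSeries.single 1 1 : LaurentSeries k) /
          (HahnSeries.single 1 1 : LaurentSeries (LaurentSeries k)) :=
  no_artinSchreier_root_laurent_general p hp k
end

section
/- Let k be a field of characteristic p > 0, let K = k((t)), and let F be the field obtained from the rational function field K(x) by adjoining a root y of the irreducible Artin–Schreier polynomial Y^p − Y − (t/x + t/(x−1)) (so F = K(x)[Y]/(Y^p − Y − (t/x + t/(x−1))) is a degree-p field extension of K(x)). Then the polynomial P(Z) = Z^p − Z − t/x has no root in F. -/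
/-
Write `F = K(x)[y]` with `y ^ p = y + u`, `u = t/x + t/(x-1)`. An element of `F` is `r(y)` with
`deg r < p`, and `r(y) ^ p = r⁽ᵖ⁾(y + u)`, where `r⁽ᵖ⁾` raises the coefficients of `r` to the
`p`-th power. So `z ^ p - z = t/x` forces the polynomial identity `r⁽ᵖ⁾(Y + u) = r(Y) + t/x`.
Its top coefficient lies in `𝔽_p`, and the next one writes either `u` or `t/x - m u`
(`m ∈ 𝔽_p`) as `c ^ p - c` with `c ∈ K(x)`. Both have a simple pole at `x = 0` or at `x = 1`,
whereas `c ^ p - c` has either no pole or a pole of order divisible by `p`.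
-/

open Polynomial WithZero

theorem Valuation.map_pow_sub_self_ne_exp_one {R : Type*} [Ring R] (v : Valuation R ℤᵐ⁰)
    {p : ℕ} (hp : 2 ≤ p) (c : R) : v (c ^ p - c) ≠ exp 1 := by
  rcases le_or_gt (v c) 1 with hc | hc
  · have h1 : (1 : ℤᵐ⁰) < exp 1 := by rw [← exp_zero, exp_lt_exp]; exact one_pos
    refine (lt_of_le_of_lt ?_ h1).ne
    calc v (c ^ p - c) ≤ max (v (c ^ p)) (v c) := v.map_sub _ _
      _ ≤ 1 := max_le (by rw [map_pow]; exact pow_le_one' hc p) hc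
  · obtain ⟨n, hn⟩ : ∃ n : ℤ, v c = exp n :=
      ⟨log (v c), (exp_log (zero_lt_one.trans hc).ne').symm⟩
    have hn0 : 0 < n := by rwa [hn, ← exp_zero, exp_lt_exp] at hc
    rw [v.map_sub_eq_of_lt_left (by rw [map_pow]; exact lt_self_pow₀ hc (by omega)), map_pow, hn,
      ← exp_nsmul, Ne, exp_inj, nsmul_eq_mul]
    nlinarith

namespace Polynomial

open IsDedekindDomain HeightOneSpectrum

variable {K : Type*} [Field K]

noncomputable def idealXSubC (α : K) : HeightOneSpectrum K[X] where
  asIdeal := Ideal.span {X - C α}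
  isPrime := (Ideal.span_singleton_prime (X_sub_C_ne_zero α)).mpr (prime_X_sub_C α)
  ne_bot := by rw [ne_eq, Ideal.span_singleton_eq_bot]; exact X_sub_C_ne_zero α

theorem valuation_idealXSubC_X_sub_C (α : K) :
    (idealXSubC α).valuation (RatFunc K) (RatFunc.X - RatFunc.C α) = exp (-1) := by
  rw [← RatFunc.algebraMap_X, ← RatFunc.algebraMap_C, ← map_sub, valuation_of_algebraMap,
    intValuation_singleton _ (X_sub_C_ne_zero α) rfl]

theorem valuation_idealXSubC_of_not_isRoot {α : K} {q : K[X]} (h : ¬ q.IsRoot α) :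
    (idealXSubC α).valuation (RatFunc K) (algebraMap K[X] (RatFunc K) q) = 1 := by
  rwa [valuation_eq_one_iff_notMem, idealXSubC, Ideal.mem_span_singleton, dvd_iff_isRoot]

theorem valuation_idealXSubC_C_div_X_sub_C_add_C_div_X_sub_C {α β c d : K} (hαβ : α ≠ β)
    (hc : c ≠ 0) :
    (idealXSubC α).valuation (RatFunc K)
      (RatFunc.C c / (RatFunc.X - RatFunc.C α) + RatFunc.C d / (RatFunc.X - RatFunc.C β)) =
        exp 1 := by
  set v := (idealXSubC α).valuation (RatFunc K)
  have hX : RatFunc.X - RatFunc.C β = algebraMap K[X] (RatFunc K) (X - C β) := by simp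
  have hpole : v (RatFunc.C c / (RatFunc.X - RatFunc.C α)) = exp 1 := by
    rw [map_div₀, valuation_idealXSubC_X_sub_C, ← RatFunc.algebraMap_C,
      valuation_idealXSubC_of_not_isRoot (by simpa using hc), one_div, ← exp_neg, neg_neg]
  have hbounded : v (RatFunc.C d / (RatFunc.X - RatFunc.C β)) ≤ 1 := by
    rw [map_div₀, hX, valuation_idealXSubC_of_not_isRoot (by simpa [sub_eq_zero] using hαβ),
      div_one, ← RatFunc.algebraMap_C]
    exact valuation_le_one _ _
  rw [Valuation.map_add_eq_of_lt_left _ (hbounded.trans_lt ?_), hpole]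
  rw [hpole, ← exp_zero, exp_lt_exp]
  exact one_pos

end Polynomial

namespace RatFunc

variable {K : Type*} [Field K] {p : ℕ}

theorem pow_sub_self_ne_C_div_X_sub_C_add_C_div_X_sub_C (hp : 2 ≤ p) {α β c d : K}
    (hαβ : α ≠ β) (hcd : c ≠ 0 ∨ d ≠ 0) (f : RatFunc K) :
    f ^ p - f ≠ C c / (X - C α) + C d / (X - C β) := by
  intro h
  rcases hcd with hc | hd
  · exact ((idealXSubC α).valuation (RatFunc K)).map_pow_sub_self_ne_exp_one hp f
      (h ▸ valuation_idealXSubC_C_div_X_sub_C_add_C_div_X_sub_C hαβ hc)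
  · rw [add_comm] at h
    exact ((idealXSubC β).valuation (RatFunc K)).map_pow_sub_self_ne_exp_one hp f
      (h ▸ valuation_idealXSubC_C_div_X_sub_C_add_C_div_X_sub_C hαβ.symm hd)

theorem pow_sub_self_ne_C_div_X_add_C_div_X_sub_one (hp : 2 ≤ p) {c d : K}
    (hcd : c ≠ 0 ∨ d ≠ 0) (f : RatFunc K) : f ^ p - f ≠ C c / X + C d / (X - 1) := by
  simpa using pow_sub_self_ne_C_div_X_sub_C_add_C_div_X_sub_C hp zero_ne_one hcd f

end RatFunc

section ArtinSchreier

variable {R : Type*} {p : ℕ}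

theorem Polynomial.coeff_taylor_natDegree_sub_one [CommRing R] (f : R[X]) (r : R) :
    (taylor r f).coeff (f.natDegree - 1) =
      f.coeff (f.natDegree - 1) + f.natDegree * f.leadingCoeff * r := by
  rw [taylor_coeff, eq_X_add_C_of_natDegree_le_one (p := hasseDeriv _ f)
    ((natDegree_hasseDeriv_le _ _).trans (by omega))]
  simp only [eval_add, eval_mul, eval_C, eval_X, hasseDeriv_coeff]
  rcases Nat.eq_zero_or_pos f.natDegree with h0 | hpos
  · simp [h0, coeff_eq_zero_of_natDegree_lt]
  · rw [zero_add, Nat.choose_self, add_comm 1, Nat.sub_add_cancel hpos, Nat.choose_symm hpos,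
      Nat.choose_one_right, Nat.cast_one, one_mul, leadingCoeff]
    ring

theorem exists_natCast_eq_of_pow_char_eq_self [CommRing R] [IsDomain R] [Fact p.Prime]
    [CharP R p] {c : R} (h : c ^ p = c) : ∃ m : ℕ, (m : R) = c := by
  have hp := (Fact.out : p.Prime)
  have hroots : (X ^ p - X : (ZMod p)[X]).roots.card = (X ^ p - X : (ZMod p)[X]).natDegree := by
    have := FiniteField.roots_X_pow_card_sub_X (ZMod p)
    rw [ZMod.card] at this
    rw [this, FiniteField.X_pow_card_sub_X_natDegree_eq _ hp.one_lt]
    simp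
  have hc : c ∈ ((X ^ p - X : (ZMod p)[X]).map (ZMod.castHom dvd_rfl R)).roots := by
    rw [mem_roots ((Polynomial.map_ne_zero_iff (ZMod.castHom dvd_rfl R).injective).mpr
      (FiniteField.X_pow_card_sub_X_ne_zero _ hp.one_lt))]
    simp [h]
  rw [← roots_map_of_injective_of_card_eq_natDegree (ZMod.castHom dvd_rfl R).injective hroots]
    at hc
  obtain ⟨m, -, rfl⟩ := Multiset.mem_map.mp hc
  exact ⟨m.val, by simp⟩

theorem exists_pow_sub_self_eq_of_pow_sub_self_eq_mul [Field R] {c e u : R} (he : e ^ p = e)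
    (he0 : e ≠ 0) (hc : c ^ p - c = e * u) : ∃ c' : R, c' ^ p - c' = u :=
  ⟨c / e, by rw [div_pow, he, ← sub_div, hc, mul_div_cancel_left₀ _ he0]⟩

theorem exists_pow_sub_self_eq_of_taylor_map_frobenius_eq [Field R] [Fact p.Prime] [CharP R p]
    {u a : R} {r : R[X]} (hr : r.natDegree < p)
    (h : taylor u (r.map (frobenius R p)) = r + C a) :
    (∃ c : R, c ^ p - c = u) ∨ ∃ (m : ℕ) (c : R), c ^ p - c = a - m * u := by
  set d := r.natDegree
  have hs : (r.map (frobenius R p)).natDegree = d :=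
    natDegree_map_eq_of_injective (frobenius_inj R p) r
  have hcoeff (k : ℕ) : (r.map (frobenius R p)).coeff k = r.coeff k ^ p := by
    rw [coeff_map, frobenius_def]
  have htop := congrArg (coeff · d) h
  have hnext := congrArg (coeff · (d - 1)) h
  simp only [← hs] at htop hnext
  rw [coeff_taylor_natDegree, leadingCoeff, hs, hcoeff, coeff_add, coeff_C] at htop
  rw [coeff_taylor_natDegree_sub_one, leadingCoeff, hs, hcoeff, hcoeff, coeff_add, coeff_C]
    at hnext
  rcases Nat.lt_or_ge d 1 with hd_zero | hd_pos
  · right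
    refine ⟨0, r.coeff 0, ?_⟩
    rw [show d = 0 by omega, if_pos rfl] at htop
    linear_combination htop
  rw [if_neg (by omega)] at htop
  obtain ⟨m, hm⟩ := exists_natCast_eq_of_pow_char_eq_self (by simpa using htop)
  rw [add_zero] at htop
  rw [htop, ← hm] at hnext
  rcases Nat.lt_or_ge d 2 with hd_one | hd_two
  · right
    refine ⟨m, r.coeff 0, ?_⟩
    rw [show d = 1 by omega, if_pos rfl] at hnext
    push_cast at hnext
    linear_combination hnext
  · left
    rw [if_neg (by omega), add_zero] at hnext
    have hdp : (d : R) ^ p = d := by rw [← frobenius_def, map_natCast]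
    have hmp : (m : R) ^ p = m := by rw [hm, htop]
    have he : (-(d * m) : R) ^ p = -(d * m) := by
      rw [neg_pow, neg_one_pow_char, mul_pow, hdp, hmp, neg_one_mul]
    have hd0 : (d : R) ≠ 0 :=
      (CharP.cast_eq_zero_iff R p d).not.mpr (Nat.not_dvd_of_pos_of_lt (by omega) hr)
    have hm0 : (m : R) ≠ 0 := hm ▸ leadingCoeff_ne_zero.mpr (ne_zero_of_natDegree_gt hd_two)
    exact exists_pow_sub_self_eq_of_pow_sub_self_eq_mul he
      (neg_ne_zero.mpr (mul_ne_zero hd0 hm0)) (by linear_combination hnext)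

namespace AdjoinRoot

theorem root_pow_eq_root_add_of [CommRing R] (u : R) :
    root (X ^ p - X - C u) ^ p = root (X ^ p - X - C u) + of _ u := by
  have h := eval₂_root (X ^ p - X - C u)
  simp only [eval₂_sub, eval₂_X_pow, eval₂_X, eval₂_C] at h
  linear_combination h

theorem mk_pow_char_eq_mk_taylor [CommRing R] [ExpChar R p] (u : R) (r : R[X]) :
    mk (X ^ p - X - C u) (r ^ p) = mk _ (taylor u (r.map (frobenius R p))) := by
  have hr : r ^ p = expand R p (r.map (frobenius R p)) := by
    rw [← map_expand, map_frobenius_expand]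
  rw [hr, ← aeval_eq, ← aeval_eq, expand_aeval, root_pow_eq_root_add_of, taylor_apply,
    aeval_comp]
  simp

theorem exists_natDegree_lt_mk_eq [CommRing R] {g : R[X]} (hg : g.Monic) (hg1 : g ≠ 1)
    (z : AdjoinRoot g) : ∃ r : R[X], r.natDegree < g.natDegree ∧ mk g r = z := by
  obtain ⟨q, rfl⟩ := mk_surjective z
  exact ⟨q %ₘ g, natDegree_modByMonic_lt q hg hg1, by
    rw [← modByMonicHom_mk hg, mk_leftInverse hg]⟩

theorem exists_taylor_map_frobenius_eq [Field R] [Fact p.Prime] [CharP R p] {u a : R}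
    {z : AdjoinRoot (X ^ p - X - C u)} (hz : z ^ p - z = of _ a) :
    ∃ r : R[X], r.natDegree < p ∧ taylor u (r.map (frobenius R p)) = r + C a := by
  have hp : 1 < p := (Fact.out : p.Prime).one_lt
  have hlin : (X + C u).natDegree < (X ^ p : R[X]).natDegree := by
    rwa [natDegree_X_add_C, natDegree_X_pow]
  have hf : (X ^ p - X - C u : R[X]) = X ^ p - (X + C u) := by ring
  have hdeg : (X ^ p - X - C u : R[X]).natDegree = p := by
    rw [hf, natDegree_sub_eq_left_of_natDegree_lt hlin, natDegree_X_pow]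
  have hmonic : (X ^ p - X - C u : R[X]).Monic :=
    hf ▸ monic_X_pow_sub (by rw [degree_X_add_C]; exact_mod_cast hp)
  obtain ⟨r, hr, rfl⟩ := exists_natDegree_lt_mk_eq hmonic (fun h => by simp [h] at hdeg; omega) z
  rw [hdeg] at hr
  refine ⟨r, hr, ?_⟩
  have hdvd : (X ^ p - X - C u) ∣ taylor u (r.map (frobenius R p)) - (r + C a) := by
    rw [← mk_eq_mk, ← mk_pow_char_eq_mk_taylor, map_pow, map_add, mk_C]
    linear_combination hz
  refine sub_eq_zero.mp (eq_zero_of_dvd_of_natDegree_lt hdvd ?_)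
  rw [hdeg]
  refine (natDegree_sub_le _ _).trans_lt (max_lt ?_ ?_)
  · rw [natDegree_taylor]; exact natDegree_map_le.trans_lt hr
  · rwa [natDegree_add_C]

theorem not_exists_pow_sub_self_eq_C_div_X [Field R] [Fact p.Prime] [CharP R p] {τ : R}
    (hτ : τ ≠ 0) :
    ¬ ∃ z : AdjoinRoot (X ^ p - X -
        C (RatFunc.C τ / RatFunc.X + RatFunc.C τ / (RatFunc.X - 1)) : (RatFunc R)[X]),
      z ^ p - z = of _ (RatFunc.C τ / RatFunc.X) := by
  rintro ⟨z, hz⟩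
  have hp := (Fact.out : p.Prime).two_le
  obtain ⟨r, hr, h⟩ := exists_taylor_map_frobenius_eq hz
  rcases exists_pow_sub_self_eq_of_taylor_map_frobenius_eq hr h with ⟨c, hc⟩ | ⟨m, c, hc⟩
  · exact RatFunc.pow_sub_self_ne_C_div_X_add_C_div_X_sub_one hp (Or.inl hτ) c hc
  · have hcd : (1 - m) * τ ≠ 0 ∨ -(m * τ) ≠ 0 := by
      by_contra! h
      exact hτ (by linear_combination h.1 - h.2)
    refine RatFunc.pow_sub_self_ne_C_div_X_add_C_div_X_sub_one hp hcd c (hc.trans ?_)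
    simp only [map_mul, map_sub, map_one, map_natCast, map_neg]
    ring

end AdjoinRoot

end ArtinSchreier

/-- Let `k` be a field of characteristic `p > 0`, `K = k((t))`, and let `F` be obtained
from the rational function field `K(x)` by adjoining a root of the (irreducible)
Artin–Schreier polynomial `Y ^ p - Y - (t/x + t/(x-1))`. Then the polynomial
`P(Z) = Z ^ p - Z - t/x` has no root in `F`. -/
theorem artinSchreier_no_root_in_adjoinRoot (p : ℕ) (hp : p.Prime)
    (k : Type*) [Field k] [CharP k p] :
    ¬ ∃ z : AdjoinRoot
        ((X ^ p - X -
          C (RatFunc.C (HahnSeries.single 1 1 : LaurentSeries k) / RatFunc.X +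
             RatFunc.C (HahnSeries.single 1 1 : LaurentSeries k) / (RatFunc.X - 1))) :
          Polynomial (RatFunc (LaurentSeries k))),
      z ^ p - z =
        AdjoinRoot.of _
          (RatFunc.C (HahnSeries.single 1 1 : LaurentSeries k) / RatFunc.X) := by
  have : Fact p.Prime := ⟨hp⟩
  have : CharP (LaurentSeries k) p := charP_of_injective_ringHom HahnSeries.C_injective p
  exact AdjoinRoot.not_exists_pow_sub_self_eq_C_div_X (HahnSeries.single_ne_zero one_ne_zero)
end
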